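/- arXiv:1511.02688 — 3 statements merged into one kernel-verified Lean document; each statement's English description precedes it below -/
import Mathlib

section
/- Let F and H be real Hilbert spaces, let E : F → ℝⁿ and D : F → H be continuous linear maps, and suppose there exists C₀ > 0 such that ‖D f‖_H ≥ C₀ ‖f‖_F for all f ∈ F. Let X be a real n×q matrix of rank q, let W be an n×n diagonal matrix with strictly positive diagonal entries, let λ > 0 and z ∈ ℝⁿ. Then the functional J(β, f) = Σᵢ Wᵢᵢ (zᵢ − (Xβ)ᵢ − (E f)ᵢ)² + λ ‖D f‖²_H admits a unique minimizer (β̃, f̃) ∈ ℝ^q × F, and the minimizing β̃ satisfies β̃ = (XᵀWX)⁻¹ Xᵀ W (z − E f̃). -/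
/-!
With `G (u, h) = (W^{1/2} u, √λ h)` into the Hilbert space `ℝⁿ ⊕₂ H`, the functional is
`J (β, f) = ‖A (β, f) - G (z, 0)‖²` for the linear operator `A (β, f) = G (X β + E f, D f)`.
The bound `C₀ ‖f‖ ≤ ‖D f‖` makes `A` injective and its range closed: the range is the sum of
the closed range of the bounded-below map `f ↦ G (E f, D f)` and a finite-dimensional subspace.
Hence the minimizers are the preimages of the orthogonal projection of `G (z, 0)` onto that range,
and there is exactly one. Orthogonality of the residual to the vectors `A (v, 0)` is the weighted
normal equation `Xᵀ W (z - E f - X β) = 0`, solved through the invertibility of `Xᵀ W X`.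
-/

open Matrix

/-- Penalized weighted least-squares functional of the functional PIRLS step. -/
noncomputable def pirlsJ {n q : ℕ} {F H : Type*}
    [NormedAddCommGroup F] [InnerProductSpace ℝ F]
    [NormedAddCommGroup H] [InnerProductSpace ℝ H]
    (E : F →L[ℝ] (Fin n → ℝ)) (D : F →L[ℝ] H)
    (X : Matrix (Fin n) (Fin q) ℝ) (w : Fin n → ℝ) (lam : ℝ) (z : Fin n → ℝ)
    (p : (Fin q → ℝ) × F) : ℝ :=
  ∑ i, w i * (z i - (X *ᵥ p.1) i - E p.2 i) ^ 2 + lam * ‖D p.2‖ ^ 2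

theorem Matrix.mulVec_injective_of_rank_eq {m k : Type*} [Fintype m] [Fintype k]
    {X : Matrix m k ℝ} (hX : X.rank = Fintype.card k) : Function.Injective X.mulVec := by
  rw [mulVec_injective_iff, linearIndependent_iff_card_eq_finrank_span, Set.finrank,
    ← rank_eq_finrank_span_cols, hX]

theorem Matrix.eq_weightedLeastSquares_of_orthogonal {m k : Type*} [Fintype m] [Fintype k]
    [DecidableEq m] [DecidableEq k] {X : Matrix m k ℝ} (hX : Function.Injective X.mulVec)
    {w : m → ℝ} (hw : ∀ i, 0 < w i) {r : m → ℝ} {β : k → ℝ}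
    (horth : ∀ v, ∑ i, w i * (r - X *ᵥ β) i * (X *ᵥ v) i = 0) :
    β = ((Xᵀ * diagonal w * X)⁻¹ * Xᵀ * diagonal w) *ᵥ r := by
  have hM : (Xᵀ * diagonal w * X).PosDef := by
    simpa using (PosDef.diagonal hw).conjTranspose_mul_mul_same hX
  have hnormal : (Xᵀ * diagonal w) *ᵥ (r - X *ᵥ β) = 0 := by
    refine dotProduct_eq_zero _ fun v => ?_
    rw [← mulVec_mulVec, ← vecMul_transpose, ← dotProduct_mulVec, transpose_transpose,
      ← horth v]
    simp only [dotProduct, mulVec_diagonal]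
  rw [mulVec_sub, mulVec_mulVec, sub_eq_zero] at hnormal
  rw [Matrix.mul_assoc _ Xᵀ, ← mulVec_mulVec, hnormal, mulVec_mulVec,
    nonsing_inv_mul _ ((isUnit_iff_isUnit_det _).mp hM.isUnit), one_mulVec]

theorem ContinuousLinearMap.isClosed_range_of_mul_norm_le {E F : Type*} [NormedAddCommGroup E]
    [NormedSpace ℝ E] [CompleteSpace E] [NormedAddCommGroup F] [NormedSpace ℝ F]
    (T : E →L[ℝ] F) {c : ℝ} (hc : 0 < c) (hT : ∀ x, c * ‖x‖ ≤ ‖T x‖) :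
    IsClosed (Set.range T) := by
  refine (T.antilipschitz_of_bound (K := c.toNNReal⁻¹) fun x => ?_).isClosed_range
    T.uniformContinuous
  rw [NNReal.coe_inv, Real.coe_toNNReal _ hc.le, ← div_eq_inv_mul, le_div_iff₀' hc]
  exact hT x

section LeastSquares
variable {𝕜 E P : Type*} [RCLike 𝕜] [NormedAddCommGroup E] [InnerProductSpace 𝕜 E]
  [AddCommGroup P] [Module 𝕜 P]

theorem Submodule.forall_norm_sub_le_iff_inner_eq_zero (K : Submodule 𝕜 E) {b y : E}
    (hy : y ∈ K) : (∀ y' ∈ K, ‖y - b‖ ≤ ‖y' - b‖) ↔ ∀ u ∈ K, inner 𝕜 (b - y) u = 0 := by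
  have hbdd : BddBelow (Set.range fun y' : K => ‖b - y'‖) :=
    ⟨0, Set.forall_mem_range.2 fun _ => norm_nonneg _⟩
  simp only [← K.norm_eq_iInf_iff_inner_eq_zero hy, norm_sub_rev _ b]
  exact ⟨fun h => le_antisymm (le_ciInf fun y' => h y' y'.2) (ciInf_le hbdd ⟨y, hy⟩),
    fun h y' hy' => h ▸ ciInf_le hbdd ⟨y', hy'⟩⟩

theorem LinearMap.forall_norm_apply_sub_le_iff_inner_eq_zero (A : P →ₗ[𝕜] E) {b : E} {p : P} :
    (∀ p', ‖A p - b‖ ≤ ‖A p' - b‖) ↔ ∀ p', inner 𝕜 (b - A p) (A p') = 0 := by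
  simpa only [mem_range, forall_exists_index, forall_apply_eq_imp_iff] using
    (range A).forall_norm_sub_le_iff_inner_eq_zero (mem_range_self A p)

theorem LinearMap.existsUnique_forall_norm_apply_sub_le (A : P →ₗ[𝕜] E)
    (hA : Function.Injective A) [(range A).HasOrthogonalProjection] (b : E) :
    ∃! p, ∀ p', ‖A p - b‖ ≤ ‖A p' - b‖ := by
  set K := range A
  obtain ⟨p₀, hp₀⟩ : K.starProjection b ∈ K := Submodule.coe_mem _
  simp only [A.forall_norm_apply_sub_le_iff_inner_eq_zero]
  refine ⟨p₀, fun p' => hp₀ ▸ K.starProjection_inner_eq_zero b _ (mem_range_self A p'),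
    fun p hp => hA ?_⟩
  rw [hp₀, K.eq_starProjection_of_mem_of_inner_eq_zero (mem_range_self A p)]
  rintro _ ⟨p', rfl⟩
  exact hp p'

end LeastSquares

section SqrtWeight
variable {n H : Type*} [NormedAddCommGroup H] [InnerProductSpace ℝ H] {w : n → ℝ} {lam : ℝ}

noncomputable def sqrtWeight [Fintype n] (w : n → ℝ) (lam : ℝ) :
    (n → ℝ) × H →L[ℝ] WithLp 2 (EuclideanSpace ℝ n × H) where
  toFun x := WithLp.toLp 2 (WithLp.toLp 2 (fun i => √(w i) * x.1 i), √lam • x.2)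
  map_add' x y := by
    simp only [Prod.fst_add, Prod.snd_add, Pi.add_apply, mul_add, smul_add]
    rfl
  map_smul' c x := by
    simp only [Prod.smul_fst, Prod.smul_snd, Pi.smul_apply, smul_eq_mul, RingHom.id_apply,
      smul_comm √lam c, mul_left_comm √(w _) c]
    rfl
  cont := by fun_prop

theorem inner_sqrtWeight [Fintype n] (hw : ∀ i, 0 ≤ w i) (hlam : 0 ≤ lam)
    (x y : (n → ℝ) × H) :
    inner ℝ (sqrtWeight w lam x) (sqrtWeight w lam y) =
      ∑ i, w i * x.1 i * y.1 i + lam * inner ℝ x.2 y.2 := by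
  simp only [sqrtWeight, ContinuousLinearMap.coe_mk', LinearMap.coe_mk, AddHom.coe_mk,
    WithLp.prod_inner_apply, PiLp.inner_apply, real_inner_smul_left, real_inner_smul_right]
  rw [← mul_assoc, Real.mul_self_sqrt hlam]
  congr 1
  refine Finset.sum_congr rfl fun i _ => ?_
  rw [Real.inner_apply]
  linear_combination x.1 i * y.1 i * Real.mul_self_sqrt (hw i)

theorem norm_sq_sqrtWeight [Fintype n] (hw : ∀ i, 0 ≤ w i) (hlam : 0 ≤ lam)
    (x : (n → ℝ) × H) : ‖sqrtWeight w lam x‖ ^ 2 = ∑ i, w i * x.1 i ^ 2 + lam * ‖x.2‖ ^ 2 := by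
  rw [← real_inner_self_eq_norm_sq, inner_sqrtWeight hw hlam, real_inner_self_eq_norm_sq]
  simp only [sq, mul_assoc]

theorem sqrt_mul_norm_snd_le_norm_sqrtWeight [Fintype n] (x : (n → ℝ) × H) :
    √lam * ‖x.2‖ ≤ ‖sqrtWeight w lam x‖ := by
  calc √lam * ‖x.2‖ = ‖(sqrtWeight w lam x).snd‖ := by
        rw [show (sqrtWeight w lam x).snd = √lam • x.2 from rfl, norm_smul,
          Real.norm_of_nonneg (Real.sqrt_nonneg _)]
    _ ≤ ‖sqrtWeight w lam x‖ := WithLp.norm_snd_le _ _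

theorem sqrtWeight_injective [Fintype n] (hw : ∀ i, 0 < w i) (hlam : 0 < lam) :
    Function.Injective (sqrtWeight (H := H) w lam) := by
  refine (injective_iff_map_eq_zero _).2 fun x hx => ?_
  have hfst (i : n) : √(w i) * x.1 i = 0 := congrArg (fun y => y.fst i) hx
  have hsnd : √lam • x.2 = 0 := congrArg WithLp.snd hx
  exact Prod.ext
    (funext fun i => (mul_eq_zero.1 (hfst i)).resolve_left (Real.sqrt_pos.2 (hw i)).ne')
    ((smul_eq_zero.1 hsnd).resolve_left (Real.sqrt_pos.2 hlam).ne')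

end SqrtWeight

section Pirls
variable {n q : ℕ} {F H : Type*} [NormedAddCommGroup F] [InnerProductSpace ℝ F]
  [NormedAddCommGroup H] [InnerProductSpace ℝ H]
  {X : Matrix (Fin n) (Fin q) ℝ} {E : F →L[ℝ] (Fin n → ℝ)} {D : F →L[ℝ] H}
  {w : Fin n → ℝ} {lam : ℝ}

variable (X E D) in
def pirlsOperator : (Fin q → ℝ) × F →ₗ[ℝ] (Fin n → ℝ) × H :=
  (X.mulVecLin.prod 0).coprod (E.prod D).toLinearMap

@[simp]
theorem pirlsOperator_apply (p : (Fin q → ℝ) × F) :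
    pirlsOperator X E D p = (X *ᵥ p.1 + E p.2, D p.2) := by
  simp [pirlsOperator]

theorem pirlsJ_eq_norm_sq (hw : ∀ i, 0 ≤ w i) (hlam : 0 ≤ lam) (z : Fin n → ℝ)
    (p : (Fin q → ℝ) × F) :
    pirlsJ E D X w lam z p =
      ‖sqrtWeight w lam (pirlsOperator X E D p) - sqrtWeight w lam (z, 0)‖ ^ 2 := by
  rw [← map_sub, norm_sq_sqrtWeight hw hlam, pirlsJ]
  simp only [pirlsOperator_apply, Prod.mk_sub_mk, sub_zero, Pi.sub_apply, Pi.add_apply]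
  congr 1
  exact Finset.sum_congr rfl fun i _ => by ring

theorem pirlsOperator_injective {C₀ : ℝ} (hC₀ : 0 < C₀) (hD : ∀ f, C₀ * ‖f‖ ≤ ‖D f‖)
    (hX : Function.Injective X.mulVec) : Function.Injective (pirlsOperator X E D) := by
  refine (injective_iff_map_eq_zero _).2 fun ⟨β, f⟩ hp => ?_
  obtain ⟨hXE, hDf⟩ := Prod.mk_eq_zero.1 ((pirlsOperator_apply _).symm.trans hp)
  have hf : f = 0 := by
    have hCf := hD f
    rw [hDf, norm_zero] at hCf
    exact norm_le_zero_iff.1 (nonpos_of_mul_nonpos_right hCf hC₀)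
  have hβ : β = 0 := hX (by simpa [hf] using hXE)
  rw [hf, hβ]; rfl

theorem isClosed_range_sqrtWeight_comp_pirlsOperator [CompleteSpace F] {C₀ : ℝ} (hC₀ : 0 < C₀)
    (hD : ∀ f, C₀ * ‖f‖ ≤ ‖D f‖) (hlam : 0 < lam) :
    IsClosed (LinearMap.range ((sqrtWeight w lam).toLinearMap ∘ₗ pirlsOperator X E D) :
      Set (WithLp 2 (EuclideanSpace ℝ (Fin n) × H))) := by
  rw [pirlsOperator, LinearMap.comp_coprod, LinearMap.range_coprod, sup_comm]
  refine Submodule.isClosed_sup_finiteDimensional _ _ ?_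
  change IsClosed (SetLike.coe (LinearMap.range ((sqrtWeight w lam).comp (E.prod D)).toLinearMap))
  rw [LinearMap.coe_range, ContinuousLinearMap.coe_coe]
  refine ContinuousLinearMap.isClosed_range_of_mul_norm_le _ (mul_pos hC₀ (Real.sqrt_pos.2 hlam))
    fun f => ?_
  calc C₀ * √lam * ‖f‖ = √lam * (C₀ * ‖f‖) := by ring
    _ ≤ √lam * ‖D f‖ := by gcongr; exact hD f
    _ ≤ _ := sqrt_mul_norm_snd_le_norm_sqrtWeight (E f, D f)

end Pirls

theorem stmt_0 {n q : ℕ} {F H : Type*}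
    [NormedAddCommGroup F] [InnerProductSpace ℝ F] [CompleteSpace F]
    [NormedAddCommGroup H] [InnerProductSpace ℝ H] [CompleteSpace H]
    (E : F →L[ℝ] (Fin n → ℝ)) (D : F →L[ℝ] H)
    (C₀ : ℝ) (hC₀ : 0 < C₀) (hD : ∀ f : F, C₀ * ‖f‖ ≤ ‖D f‖)
    (X : Matrix (Fin n) (Fin q) ℝ) (hX : X.rank = q)
    (w : Fin n → ℝ) (hw : ∀ i, 0 < w i)
    (lam : ℝ) (hlam : 0 < lam) (z : Fin n → ℝ) :
    (∃! p : (Fin q → ℝ) × F,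
      ∀ p' : (Fin q → ℝ) × F,
        pirlsJ E D X w lam z p ≤ pirlsJ E D X w lam z p') ∧
    (∀ p : (Fin q → ℝ) × F,
      (∀ p' : (Fin q → ℝ) × F,
        pirlsJ E D X w lam z p ≤ pirlsJ E D X w lam z p') →
      p.1 = ((Xᵀ * diagonal w * X)⁻¹ * Xᵀ * diagonal w) *ᵥ (z - E p.2)) := by
  set G := sqrtWeight (H := H) w lam
  set A := G.toLinearMap ∘ₗ pirlsOperator X E D
  have hXinj : Function.Injective X.mulVec := mulVec_injective_of_rank_eq (by simpa using hX)
  have hmin (p : (Fin q → ℝ) × F) : (∀ p', pirlsJ E D X w lam z p ≤ pirlsJ E D X w lam z p') ↔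
      ∀ p', ‖A p - G (z, 0)‖ ≤ ‖A p' - G (z, 0)‖ := by
    simp only [pirlsJ_eq_norm_sq (fun i => (hw i).le) hlam.le, sq_le_sq₀ (norm_nonneg _)
      (norm_nonneg _)]
    rfl
  have : CompleteSpace (LinearMap.range A) :=
    (isClosed_range_sqrtWeight_comp_pirlsOperator hC₀ hD hlam).completeSpace_coe
  refine ⟨?_, fun ⟨β, f⟩ hp => eq_weightedLeastSquares_of_orthogonal hXinj hw fun v => ?_⟩
  · simpa only [hmin] using A.existsUnique_forall_norm_apply_sub_le
      ((sqrtWeight_injective hw hlam).comp (pirlsOperator_injective hC₀ hD hXinj)) _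
  · have horth := (A.forall_norm_apply_sub_le_iff_inner_eq_zero.1 ((hmin _).1 hp)) (v, 0)
    rw [LinearMap.comp_apply, LinearMap.comp_apply, ContinuousLinearMap.coe_coe, ← map_sub,
      inner_sqrtWeight (fun i => (hw i).le) hlam.le] at horth
    simpa [sub_sub, add_comm] using horth
end

section
/- Let F and H be real Hilbert spaces, let E : F → ℝⁿ and D : F → H be continuous linear maps with ‖D f‖_H ≥ C₀ ‖f‖_F for all f ∈ F, for some C₀ > 0. Let X be a real n×q matrix of rank q, set Q = Iₙ − X(XᵀX)⁻¹Xᵀ, let λ > 0 and z ∈ ℝⁿ. Then there exists a unique f̃ ∈ F such that for all u ∈ F: (E u)ᵀ Q (E f̃) + λ ⟨D u, D f̃⟩_H = (E u)ᵀ Q z; moreover this f̃ is the unique minimizer over F of the functional f ↦ (z − E f)ᵀ Q (z − E f) + λ ‖D f‖²_H. -/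
/-!
The form `B u v = (E u)ᵀ Q (E v) + λ ⟪D u, D v⟫` is symmetric and coercive: `Q` is a symmetric
idempotent, hence positive semidefinite, and the penalty alone gives `B u u ≥ λ C₀² ‖u‖²`.
Lax–Milgram then yields a unique weak solution `f̃`. Up to the constant `zᵀ Q z`, the objective is
the energy `B f f - 2 (E f)ᵀ Q z`, and for a weak solution the energy at `f` exceeds the energy
at `f̃` by exactly `B (f - f̃) (f - f̃)`, which is nonnegative and vanishes only at `f = f̃`.
-/

open Matrix

namespace Matrix

variable {m n : Type*} [Fintype m] [Fintype n] [DecidableEq n]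

theorem isUnit_det_of_rank_eq_card {K : Type*} [Field K] {A : Matrix n n K}
    (hA : A.rank = Fintype.card n) : IsUnit A.det := by
  have hrange : LinearMap.range A.mulVecLin = ⊤ :=
    Submodule.eq_top_of_finrank_eq (by simpa [Matrix.rank] using hA)
  rw [← isUnit_iff_isUnit_det, ← mulVec_surjective_iff_isUnit]
  simpa only [coe_mulVecLin] using LinearMap.range_eq_top.mp hrange

theorem isUnit_det_transpose_mul_self_of_rank_eq_card {K : Type*} [Field K] [LinearOrder K]
    [IsStrictOrderedRing K] {X : Matrix m n K}
    (hX : X.rank = Fintype.card n) : IsUnit (Xᵀ * X).det :=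
  isUnit_det_of_rank_eq_card (by rw [rank_transpose_mul_self, hX])

theorem posSemidef_one_sub_mul_inv_mul_transpose [DecidableEq m] {X : Matrix m n ℝ}
    (hX : IsUnit (Xᵀ * X).det) : (1 - X * (Xᵀ * X)⁻¹ * Xᵀ).PosSemidef := by
  set Q := 1 - X * (Xᵀ * X)⁻¹ * Xᵀ
  have hsymm : Qᵀ = Q := by
    simp [Q, transpose_sub, transpose_mul, transpose_nonsing_inv, Matrix.mul_assoc]
  have hidem : Q * Q = Q := by
    have hP : X * (Xᵀ * X)⁻¹ * Xᵀ * (X * (Xᵀ * X)⁻¹ * Xᵀ) = X * (Xᵀ * X)⁻¹ * Xᵀ := by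
      simp only [Matrix.mul_assoc]
      rw [← Matrix.mul_assoc Xᵀ X, nonsing_inv_mul_cancel_left _ _ hX]
    simp only [Q, Matrix.sub_mul, Matrix.mul_sub, Matrix.one_mul, Matrix.mul_one, hP]
    abel
  have hQ : Q = Qᴴ * Q := by rw [conjTranspose_eq_transpose_of_trivial, hsymm, hidem]
  rw [hQ]
  exact posSemidef_conjTranspose_mul_self Q

noncomputable def toContinuousLinearMap₂' (Q : Matrix n n ℝ) :
    (n → ℝ) →L[ℝ] (n → ℝ) →L[ℝ] ℝ :=
  (Matrix.toLinearMap₂' ℝ Q).toContinuousBilinearMap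

@[simp]
theorem toContinuousLinearMap₂'_apply (Q : Matrix n n ℝ) (x y : n → ℝ) :
    toContinuousLinearMap₂' Q x y = x ⬝ᵥ (Q *ᵥ y) := by
  simp [toContinuousLinearMap₂', toLinearMap₂'_apply']

end Matrix

section Energy

variable {V : Type*} [NormedAddCommGroup V] [NormedSpace ℝ V] {B : V →L[ℝ] V →L[ℝ] ℝ}
  {ℓ : V → ℝ} {u : V}

theorem apply_self_sub_two_mul_eq_of_forall_apply_eq (hBs : ∀ v w, B v w = B w v)
    (hu : ∀ v, B v u = ℓ v) (f : V) :
    B f f - 2 * ℓ f = B u u - 2 * ℓ u + B (f - u) (f - u) := by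
  simp only [map_sub, _root_.sub_apply, ← hu]
  rw [hBs u f]
  ring

theorem apply_self_sub_two_mul_le (hB : ∀ v, 0 ≤ B v v) (hBs : ∀ v w, B v w = B w v)
    (hu : ∀ v, B v u = ℓ v) (f : V) : B u u - 2 * ℓ u ≤ B f f - 2 * ℓ f := by
  rw [apply_self_sub_two_mul_eq_of_forall_apply_eq hBs hu f]
  linarith [hB (f - u)]

end Energy

namespace IsCoercive

section Normed

variable {V : Type*} [NormedAddCommGroup V] [NormedSpace ℝ V] {A B : V →L[ℝ] V →L[ℝ] ℝ}

theorem flip (hB : IsCoercive B) : IsCoercive B.flip := hB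

theorem smul (hB : IsCoercive B) {c : ℝ} (hc : 0 < c) : IsCoercive (c • B) := by
  obtain ⟨C, hC, hCB⟩ := hB
  refine ⟨c * C, by positivity, fun u => ?_⟩
  simpa [mul_assoc] using mul_le_mul_of_nonneg_left (hCB u) hc.le

theorem add_left (hB : IsCoercive B) (hA : ∀ u, 0 ≤ A u u) : IsCoercive (A + B) := by
  obtain ⟨C, hC, hCB⟩ := hB
  exact ⟨C, hC, fun u => by simpa using add_le_add (hA u) (hCB u)⟩

theorem apply_self_nonneg (hB : IsCoercive B) (u : V) : 0 ≤ B u u := by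
  obtain ⟨C, hC, hCB⟩ := hB
  exact (by positivity : 0 ≤ C * ‖u‖ * ‖u‖).trans (hCB u)

theorem eq_zero_of_apply_self_nonpos (hB : IsCoercive B) {u : V} (hu : B u u ≤ 0) : u = 0 := by
  obtain ⟨C, hC, hCB⟩ := hB
  have hCu : C * (‖u‖ * ‖u‖) ≤ 0 := mul_assoc C ‖u‖ ‖u‖ ▸ (hCB u).trans hu
  exact norm_eq_zero.mp <| mul_self_eq_zero.mp <|
    le_antisymm (nonpos_of_mul_nonpos_right hCu hC) (mul_self_nonneg _)

theorem eq_of_apply_self_sub_two_mul_le (hB : IsCoercive B) (hBs : ∀ v w, B v w = B w v)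
    {ℓ : V → ℝ} {u f : V} (hu : ∀ v, B v u = ℓ v) (hf : B f f - 2 * ℓ f ≤ B u u - 2 * ℓ u) :
    f = u := by
  rw [apply_self_sub_two_mul_eq_of_forall_apply_eq hBs hu f] at hf
  exact sub_eq_zero.mp (hB.eq_zero_of_apply_self_nonpos (by linarith))

end Normed

variable {V : Type*} [NormedAddCommGroup V] [InnerProductSpace ℝ V] [CompleteSpace V]
  {B : V →L[ℝ] V →L[ℝ] ℝ}

theorem existsUnique_forall_apply_eq (hB : IsCoercive B) (ℓ : StrongDual ℝ V) :
    ∃! u, ∀ v, B u v = ℓ v := by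
  refine ⟨hB.continuousLinearEquivOfBilin.symm ((InnerProductSpace.toDual ℝ V).symm ℓ),
    fun v => ?_, fun u hu => ?_⟩
  · rw [← hB.continuousLinearEquivOfBilin_apply, ContinuousLinearEquiv.apply_symm_apply,
      InnerProductSpace.toDual_symm_apply]
  · rw [ContinuousLinearEquiv.eq_symm_apply, eq_comm]
    exact hB.unique_continuousLinearEquivOfBilin fun v => by
      rw [InnerProductSpace.toDual_symm_apply, hu]

end IsCoercive

section PenalizedLeastSquares

variable {n F H : Type*} [Fintype n] [DecidableEq n] [NormedAddCommGroup F]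
  [InnerProductSpace ℝ F] [NormedAddCommGroup H] [InnerProductSpace ℝ H]

noncomputable def penalizedForm (E : F →L[ℝ] (n → ℝ)) (D : F →L[ℝ] H) (Q : Matrix n n ℝ)
    (lam : ℝ) : F →L[ℝ] F →L[ℝ] ℝ :=
  (toContinuousLinearMap₂' Q).bilinearComp E E +
    lam • ((innerSL ℝ).bilinearComp D D : F →L[ℝ] F →L[ℝ] ℝ)

variable {E : F →L[ℝ] (n → ℝ)} {D : F →L[ℝ] H} {Q : Matrix n n ℝ} {lam : ℝ}

theorem penalizedForm_apply (u v : F) :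
    penalizedForm E D Q lam u v = E u ⬝ᵥ (Q *ᵥ E v) + lam * inner ℝ (D u) (D v) := by
  simp [penalizedForm]

theorem penalizedForm_comm (hQ : Qᵀ = Q) (u v : F) :
    penalizedForm E D Q lam u v = penalizedForm E D Q lam v u := by
  rw [penalizedForm_apply, penalizedForm_apply, dotProduct_mulVec, ← mulVec_transpose, hQ,
    dotProduct_comm, real_inner_comm]

theorem isCoercive_innerSL_bilinearComp {C₀ : ℝ} (hC₀ : 0 < C₀) (hD : ∀ f, C₀ * ‖f‖ ≤ ‖D f‖) :
    IsCoercive ((innerSL ℝ).bilinearComp D D : F →L[ℝ] F →L[ℝ] ℝ) := by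
  refine ⟨C₀ ^ 2, by positivity, fun u => ?_⟩
  have := mul_self_le_mul_self (by positivity) (hD u)
  simp only [ContinuousLinearMap.bilinearComp_apply, innerSL_apply_apply,
    real_inner_self_eq_norm_sq]
  nlinarith

theorem isCoercive_penalizedForm (hQ : Q.PosSemidef) {C₀ : ℝ} (hC₀ : 0 < C₀)
    (hD : ∀ f, C₀ * ‖f‖ ≤ ‖D f‖) (hlam : 0 < lam) : IsCoercive (penalizedForm E D Q lam) :=
  ((isCoercive_innerSL_bilinearComp hC₀ hD).smul hlam).add_left fun u => by
    simpa using hQ.dotProduct_mulVec_nonneg (E u)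

theorem penalized_objective_eq (hQ : Qᵀ = Q) (z : n → ℝ) (f : F) :
    (z - E f) ⬝ᵥ (Q *ᵥ (z - E f)) + lam * ‖D f‖ ^ 2
      = z ⬝ᵥ (Q *ᵥ z) + (penalizedForm E D Q lam f f - 2 * (E f ⬝ᵥ (Q *ᵥ z))) := by
  have hsymm : z ⬝ᵥ (Q *ᵥ E f) = E f ⬝ᵥ (Q *ᵥ z) := by
    rw [dotProduct_mulVec, ← mulVec_transpose, hQ, dotProduct_comm]
  simp only [penalizedForm_apply, mulVec_sub, sub_dotProduct, dotProduct_sub, hsymm,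
    real_inner_self_eq_norm_sq]
  ring

end PenalizedLeastSquares

theorem stmt_1_general {n q : ℕ} {F H : Type*}
    [NormedAddCommGroup F] [InnerProductSpace ℝ F] [CompleteSpace F]
    [NormedAddCommGroup H] [InnerProductSpace ℝ H]
    (E : F →L[ℝ] (Fin n → ℝ)) (D : F →L[ℝ] H)
    (C₀ : ℝ) (hC₀ : 0 < C₀) (hD : ∀ f : F, C₀ * ‖f‖ ≤ ‖D f‖)
    (X : Matrix (Fin n) (Fin q) ℝ) (hX : X.rank = q)
    (Q : Matrix (Fin n) (Fin n) ℝ) (hQ : Q = 1 - X * (Xᵀ * X)⁻¹ * Xᵀ)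
    (lam : ℝ) (hlam : 0 < lam) (z : Fin n → ℝ) :
    (∃! ftil : F, ∀ u : F,
        E u ⬝ᵥ (Q *ᵥ E ftil) + lam * (inner ℝ (D u) (D ftil) : ℝ)
          = E u ⬝ᵥ (Q *ᵥ z)) ∧
    (∀ ftil : F,
      (∀ u : F,
        E u ⬝ᵥ (Q *ᵥ E ftil) + lam * (inner ℝ (D u) (D ftil) : ℝ)
          = E u ⬝ᵥ (Q *ᵥ z)) →
      ((∀ f : F,
          (z - E ftil) ⬝ᵥ (Q *ᵥ (z - E ftil)) + lam * ‖D ftil‖ ^ 2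
            ≤ (z - E f) ⬝ᵥ (Q *ᵥ (z - E f)) + lam * ‖D f‖ ^ 2) ∧
        (∀ f : F,
          (∀ g : F,
            (z - E f) ⬝ᵥ (Q *ᵥ (z - E f)) + lam * ‖D f‖ ^ 2
              ≤ (z - E g) ⬝ᵥ (Q *ᵥ (z - E g)) + lam * ‖D g‖ ^ 2) →
          f = ftil))) := by
  have hQpsd : Q.PosSemidef := hQ ▸ posSemidef_one_sub_mul_inv_mul_transpose
    (isUnit_det_transpose_mul_self_of_rank_eq_card (by rwa [Fintype.card_fin]))
  have hQsymm : Qᵀ = Q := by rw [← conjTranspose_eq_transpose_of_trivial]; exact hQpsd.1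
  set B := penalizedForm E D Q lam
  have hBc : IsCoercive B := isCoercive_penalizedForm hQpsd hC₀ hD hlam
  have hBs : ∀ u v, B u v = B v u := penalizedForm_comm hQsymm
  have hweak (f u : F) : E u ⬝ᵥ (Q *ᵥ E f) + lam * inner ℝ (D u) (D f) = B u f :=
    (penalizedForm_apply u f).symm
  simp only [hweak, penalized_objective_eq hQsymm z, add_le_add_iff_left]
  have hLaxMilgram :=
    hBc.flip.existsUnique_forall_apply_eq ((toContinuousLinearMap₂' Q).flip z ∘L E)
  refine ⟨by simpa using hLaxMilgram,
    fun ftil hftil => ⟨apply_self_sub_two_mul_le hBc.apply_self_nonneg hBs hftil,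
      fun f hf => hBc.eq_of_apply_self_sub_two_mul_le hBs hftil (hf ftil)⟩⟩

theorem stmt_1 {n q : ℕ} {F H : Type*}
    [NormedAddCommGroup F] [InnerProductSpace ℝ F] [CompleteSpace F]
    [NormedAddCommGroup H] [InnerProductSpace ℝ H] [CompleteSpace H]
    (E : F →L[ℝ] (Fin n → ℝ)) (D : F →L[ℝ] H)
    (C₀ : ℝ) (hC₀ : 0 < C₀) (hD : ∀ f : F, C₀ * ‖f‖ ≤ ‖D f‖)
    (X : Matrix (Fin n) (Fin q) ℝ) (hX : X.rank = q)
    (Q : Matrix (Fin n) (Fin n) ℝ) (hQ : Q = 1 - X * (Xᵀ * X)⁻¹ * Xᵀ)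
    (lam : ℝ) (hlam : 0 < lam) (z : Fin n → ℝ) :
    (∃! ftil : F, ∀ u : F,
        E u ⬝ᵥ (Q *ᵥ E ftil) + lam * (inner ℝ (D u) (D ftil) : ℝ)
          = E u ⬝ᵥ (Q *ᵥ z)) ∧
    (∀ ftil : F,
      (∀ u : F,
        E u ⬝ᵥ (Q *ᵥ E ftil) + lam * (inner ℝ (D u) (D ftil) : ℝ)
          = E u ⬝ᵥ (Q *ᵥ z)) →
      ((∀ f : F,
          (z - E ftil) ⬝ᵥ (Q *ᵥ (z - E ftil)) + lam * ‖D ftil‖ ^ 2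
            ≤ (z - E f) ⬝ᵥ (Q *ᵥ (z - E f)) + lam * ‖D f‖ ^ 2) ∧
        (∀ f : F,
          (∀ g : F,
            (z - E f) ⬝ᵥ (Q *ᵥ (z - E f)) + lam * ‖D f‖ ^ 2
              ≤ (z - E g) ⬝ᵥ (Q *ᵥ (z - E g)) + lam * ‖D g‖ ^ 2) →
          f = ftil))) :=
  stmt_1_general E D C₀ hC₀ hD X hX Q hQ lam hlam z
end

section
/- Let F be a real normed vector space, L₁, …, Lₙ : F → ℝ continuous linear functionals, X a real n×q matrix with rows x₁ᵀ, …, xₙᵀ, b : ℝ → ℝ differentiable with derivative b', y ∈ ℝⁿ, φ > 0, λ ≥ 0, and m : F × F → ℝ a continuous bilinear symmetric form. Define L_p(β, f) = (1/φ) Σᵢ (yᵢ θᵢ(β, f) − b(θᵢ(β, f))) − (λ/2) m(f, f), with θᵢ(β, f) = xᵢᵀβ + Lᵢ f. If (β̂, f̂) ∈ ℝ^q × F maximizes L_p, then: (i) Σᵢ (yᵢ − b'(θᵢ(β̂, f̂))) x_{ik} = 0 for every k = 1, …, q; and (ii) (1/φ) Σᵢ (yᵢ − b'(θᵢ(β̂,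 f̂))) Lᵢ u = λ m(u, f̂) for every u ∈ F. -/
/-! Restricted to a line `t ↦ p̂ + t • d` through the maximiser, the penalized log-likelihood is a
differentiable function of one real variable with a maximum at `t = 0`, so its derivative there,
the directional derivative of `L_p` along `d`, vanishes. The direction `d = (eₖ, 0)` gives (i),
and `d = (0, u)` gives (ii) once the symmetry of `m` merges `m u f̂ + m f̂ u` into `2 m u f̂`. -/

open Matrix

theorem LinearMap.hasDerivAt_apply_add_smul_self {F : Type*} [AddCommGroup F] [Module ℝ F]
    (m : F →ₗ[ℝ] F →ₗ[ℝ] ℝ) (f u : F) :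
    HasDerivAt (fun t : ℝ => m (f + t • u) (f + t • u)) (m u f + m f u) 0 := by
  have hexpand : (fun t : ℝ => m (f + t • u) (f + t • u))
      = fun t => m f f + t * (m u f + m f u) + t ^ 2 * m u u := by
    funext t
    simp only [map_add, map_smul, LinearMap.add_apply, LinearMap.smul_apply, smul_eq_mul]
    ring
  rw [hexpand]
  have hpoly := (((hasDerivAt_id (0 : ℝ)).mul_const (m u f + m f u)).const_add (m f f)).add
    ((hasDerivAt_pow 2 (0 : ℝ)).mul_const (m u u))
  exact hpoly.congr_deriv (by simp)

theorem hasDerivAt_sum_mul_sub_comp_add_mul {n : ℕ} {b b' : ℝ → ℝ}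
    (hb : ∀ x, HasDerivAt b (b' x) x) (y c a : Fin n → ℝ) :
    HasDerivAt (fun t : ℝ => ∑ i, (y i * (c i + t * a i) - b (c i + t * a i)))
      (∑ i, (y i - b' (c i)) * a i) 0 := by
  refine HasDerivAt.fun_sum fun i _ => ?_
  have hline : HasDerivAt (fun t : ℝ => c i + t * a i) (a i) 0 := by
    simpa using ((hasDerivAt_id (0 : ℝ)).mul_const (a i)).const_add (c i)
  have hcomp : HasDerivAt (fun t : ℝ => b (c i + t * a i)) (b' (c i) * a i) 0 := by
    have h := (hb (c i + 0 * a i)).comp 0 hline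
    simp only [zero_mul, add_zero] at h
    exact h
  exact ((hline.const_mul (y i)).sub hcomp).congr_deriv (by ring)

section PenalizedLikelihood

variable {n q : ℕ} {F : Type*} [AddCommGroup F] [Module ℝ F]
  (L : Fin n → F →ₗ[ℝ] ℝ) (X : Matrix (Fin n) (Fin q) ℝ) (b : ℝ → ℝ) (y : Fin n → ℝ)
  (φ lam : ℝ) (m : F →ₗ[ℝ] F →ₗ[ℝ] ℝ)

def linearPredictor (p : (Fin q → ℝ) × F) : Fin n → ℝ :=
  fun i => (X *ᵥ p.1) i + L i p.2

theorem linearPredictor_add_smul (p d : (Fin q → ℝ) × F) (t : ℝ) (i : Fin n) :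
    linearPredictor L X (p + t • d) i = linearPredictor L X p i + t * linearPredictor L X d i := by
  simp only [linearPredictor, Prod.fst_add, Prod.snd_add, Prod.smul_fst, Prod.smul_snd,
    mulVec_add, mulVec_smul, map_add, map_smul, Pi.add_apply, Pi.smul_apply, smul_eq_mul]
  ring

noncomputable def penalizedLogLik (p : (Fin q → ℝ) × F) : ℝ :=
  (1 / φ) * ∑ i, (y i * linearPredictor L X p i - b (linearPredictor L X p i))
    - (lam / 2) * m p.2 p.2

variable {b} {b' : ℝ → ℝ}

theorem hasDerivAt_penalizedLogLik_add_smul (hb : ∀ x, HasDerivAt b (b' x) x)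
    (p d : (Fin q → ℝ) × F) :
    HasDerivAt (fun t : ℝ => penalizedLogLik L X b y φ lam m (p + t • d))
      ((1 / φ) * ∑ i, (y i - b' (linearPredictor L X p i)) * linearPredictor L X d i
        - (lam / 2) * (m d.2 p.2 + m p.2 d.2)) 0 := by
  simp only [penalizedLogLik, linearPredictor_add_smul, Prod.snd_add, Prod.smul_snd]
  exact ((hasDerivAt_sum_mul_sub_comp_add_mul hb y _ _).const_mul (1 / φ)).sub
    ((m.hasDerivAt_apply_add_smul_self p.2 d.2).const_mul (lam / 2))

theorem penalizedLogLik_directional_eq_of_isMax (hb : ∀ x, HasDerivAt b (b' x) x)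
    {p : (Fin q → ℝ) × F}
    (hmax : ∀ p', penalizedLogLik L X b y φ lam m p' ≤ penalizedLogLik L X b y φ lam m p)
    (d : (Fin q → ℝ) × F) :
    (1 / φ) * ∑ i, (y i - b' (linearPredictor L X p i)) * linearPredictor L X d i
      = (lam / 2) * (m d.2 p.2 + m p.2 d.2) := by
  have hloc : IsLocalMax (fun t : ℝ => penalizedLogLik L X b y φ lam m (p + t • d)) 0 :=
    Filter.Eventually.of_forall fun t => by simpa using hmax (p + t • d)
  exact sub_eq_zero.mp (hloc.hasDerivAt_eq_zero
    (hasDerivAt_penalizedLogLik_add_smul L X y φ lam m hb p d))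

end PenalizedLikelihood

theorem stmt_14_general {n q : ℕ} {F : Type*} [NormedAddCommGroup F] [NormedSpace ℝ F]
    (L : Fin n → (F →L[ℝ] ℝ))
    (X : Matrix (Fin n) (Fin q) ℝ)
    (b b' : ℝ → ℝ) (hb : ∀ x : ℝ, HasDerivAt b (b' x) x)
    (y : Fin n → ℝ) (φ : ℝ) (hφ : 0 < φ) (lam : ℝ)
    (m : F →ₗ[ℝ] F →ₗ[ℝ] ℝ)
    (hmsymm : ∀ u v : F, m u v = m v u)
    (βhat : Fin q → ℝ) (fhat : F)
    (hmax : ∀ p : (Fin q → ℝ) × F,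
      (1 / φ) * ∑ i, (y i * ((X *ᵥ p.1) i + L i p.2) - b ((X *ᵥ p.1) i + L i p.2))
          - (lam / 2) * m p.2 p.2
        ≤ (1 / φ) * ∑ i, (y i * ((X *ᵥ βhat) i + L i fhat) - b ((X *ᵥ βhat) i + L i fhat))
          - (lam / 2) * m fhat fhat) :
    (∀ k : Fin q, ∑ i, (y i - b' ((X *ᵥ βhat) i + L i fhat)) * X i k = 0) ∧
    (∀ u : F,
      (1 / φ) * ∑ i, (y i - b' ((X *ᵥ βhat) i + L i fhat)) * L i u
        = lam * m u fhat) := by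
  have hcrit := penalizedLogLik_directional_eq_of_isMax (fun i => (L i : F →ₗ[ℝ] ℝ)) X y φ
    lam m hb (p := (βhat, fhat)) hmax
  refine ⟨fun k => ?_, fun u => ?_⟩
  · have hk := hcrit (Pi.single k 1, 0)
    simp only [linearPredictor, ContinuousLinearMap.coe_coe, mulVec_single, map_zero,
      LinearMap.zero_apply, add_zero, mul_zero] at hk
    simpa [hφ.ne'] using hk
  · have hu := hcrit (0, u)
    simp only [linearPredictor, ContinuousLinearMap.coe_coe, mulVec_zero, Pi.zero_apply,
      zero_add] at hu
    rw [hu, hmsymm fhat u]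
    ring

theorem stmt_14 {n q : ℕ} {F : Type*} [NormedAddCommGroup F] [NormedSpace ℝ F]
    (L : Fin n → (F →L[ℝ] ℝ))
    (X : Matrix (Fin n) (Fin q) ℝ)
    (b b' : ℝ → ℝ) (hb : ∀ x : ℝ, HasDerivAt b (b' x) x)
    (y : Fin n → ℝ) (φ : ℝ) (hφ : 0 < φ) (lam : ℝ) (hlam : 0 ≤ lam)
    (m : F →ₗ[ℝ] F →ₗ[ℝ] ℝ)
    (hmcont : ∃ M : ℝ, ∀ u v : F, |m u v| ≤ M * ‖u‖ * ‖v‖)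
    (hmsymm : ∀ u v : F, m u v = m v u)
    (βhat : Fin q → ℝ) (fhat : F)
    (hmax : ∀ p : (Fin q → ℝ) × F,
      (1 / φ) * ∑ i, (y i * ((X *ᵥ p.1) i + L i p.2) - b ((X *ᵥ p.1) i + L i p.2))
          - (lam / 2) * m p.2 p.2
        ≤ (1 / φ) * ∑ i, (y i * ((X *ᵥ βhat) i + L i fhat) - b ((X *ᵥ βhat) i + L i fhat))
          - (lam / 2) * m fhat fhat) :
    (∀ k : Fin q, ∑ i, (y i - b' ((X *ᵥ βhat) i + L i fhat)) * X i k = 0) ∧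
    (∀ u : F,
      (1 / φ) * ∑ i, (y i - b' ((X *ᵥ βhat) i + L i fhat)) * L i u
        = lam * m u fhat) :=
  stmt_14_general L X b b' hb y φ hφ lam m hmsymm βhat fhat hmax
end
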